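/- (Theorem 7.2, type B) Fix n ≥ 1 and let Q be the valued translation quiver realizing ℤB_{n+1} described in the context. A subset C ⊆ ℤ × {0,…,n} is a configuration of Q if and only if there exists a symmetric 2-Brauer relation σ of rank 2n such that C = { (p,r) ∈ ℤ × {0,…,n} : the image of p+r in ZMod (2n) equals σ applied to the image of p in ZMod (2n) }. Moreover σ is uniquely determined by C, so this assignment is a bijection between the configurations of ℤB_{n+1} and the symmetric 2-Brauer relations of rank 2n. -/

import Mathlib

/-- Valued sum over the arrows `y → v` of the valued translation quiver realizing
`ℤB_{n+1}`: the vertex set is `ℤ × {0,…,n}`, with arrows `(q,s) → (q,s+1)` for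
`s < n` and `(q,s) → (q+1,s-1)` for `0 < s`; each arrow `(q,n-1) → (q,n)` carries
valuation `(2,1)` and each arrow `(q,n) → (q+1,n-1)` carries valuation `(1,2)`,
all other arrows carry valuation `(1,1)`. Here each summand `f v` is weighted
by the first component of the valuation of the arrow `y → v`. -/
def stepB (n : ℕ) (f : ℤ × ℕ → ℕ) (y : ℤ × ℕ) : ℤ :=
  (if y.2 < n then (if y.2 = n - 1 then 2 else 1) * (f (y.1, y.2 + 1) : ℤ) else 0) +
    (if 0 < y.2 then (f (y.1 + 1, y.2 - 1) : ℤ) else 0)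

/-- `hB n x k y` is `h_k(y,x)` for `ℤB_{n+1}`: `h_0(y,x) = δ(y,x)` and, for `k > 0`,
`h_k(y,x) = max(h'_k(y,x), 0)` where
`h'_k(y,x) = ∑_{α : y → v} d_α · h_{k-1}(v,x) - h_{k-2}(τ⁻¹ y, x)` and
`τ⁻¹(q,s) = (q+1,s)`. -/
def hB (n : ℕ) (x : ℤ × ℕ) : ℕ → ℤ × ℕ → ℕ
  | 0 => fun y => if y = x then 1 else 0
  | 1 => fun y => (stepB n (hB n x 0) y).toNat
  | k + 2 => fun y =>
      (stepB n (hB n x (k + 1)) y - (hB n x k (y.1 + 1, y.2) : ℤ)).toNat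

/-- `h'B n x k y` is `h'_k(y,x)` for `ℤB_{n+1}` (meaningful for `k ≥ 1`). -/
def h'B (n : ℕ) (x : ℤ × ℕ) (k : ℕ) (y : ℤ × ℕ) : ℤ :=
  stepB n (hB n x (k - 1)) y -
    (if 2 ≤ k then (hB n x (k - 2) (y.1 + 1, y.2) : ℤ) else 0)

/-- `hTotB n y x = h(y,x) = ∑_{k ≥ 0} h_k(y,x)` for `ℤB_{n+1}`. -/
noncomputable def hTotB (n : ℕ) (y x : ℤ × ℕ) : ℕ := ∑ᶠ k : ℕ, hB n x k y

/-- `ω` for `ℤB_{n+1}`: `ω(p,r) = (p-n, r)`. -/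
def ωB (n : ℕ) (v : ℤ × ℕ) : ℤ × ℕ := (v.1 - n, v.2)

/-- A configuration of the valued translation quiver realizing `ℤB_{n+1}`. -/
def IsConfigB (n : ℕ) (C : Set (ℤ × ℕ)) : Prop :=
  (∀ v ∈ C, v.2 ≤ n) ∧
    (∀ y : ℤ × ℕ, y.2 ≤ n → ∃ c ∈ C, 0 < hTotB n y c) ∧
    ωB n '' C = C ∧
    ∀ c ∈ C, ∀ d ∈ C,
      hTotB n d c =
        if d = c ∧ c = ωB n c then 2
        else if d = c ∨ d = ωB n c then 1
        else 0

/-- A symmetric `2`-Brauer relation of rank `2n`: an involution `σ` of `ZMod (2n)`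
which is noncrossing and symmetric with respect to rotation by `π`,
i.e. `σ (i + n) = σ i + n` for all `i`. -/
def IsSymTwoBrauer (n : ℕ) (σ : ZMod (2 * n) → ZMod (2 * n)) : Prop :=
  Function.Involutive σ ∧
    (¬ ∃ i j : ZMod (2 * n),
        i.val < j.val ∧ j.val < (σ i).val ∧ (σ i).val < (σ j).val) ∧
    ∀ i : ZMod (2 * n), σ (i + (n : ZMod (2 * n))) = σ i + (n : ZMod (2 * n))

/-!
Read a vertex `(p, r)` as the arc from `p` to `p + r` of the circle `ℤ / 2n`, lifted to `ℤ`.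
By induction on `k`, `h_k(y, x)` lives in the single degree `k = 2 (x.1 - y.1) + x.2 - y.2`, and
`h(y, x)` counts which of two arcs the arc of `y` weakly crosses: the arc of `x`, and (when
`y.2 < n`) the arc of `x` turned by `π` and read from its other end. So (C2) says that `d ∈ C`
lies in the hammock of `c ∈ C` only for `d = c` and `d = ω c`.

For a symmetric noncrossing involution `σ`, two weakly crossing arcs of `C_σ` must span the same
chord of `σ`, which forces `d ∈ {c, ω c}`; and every point of the circle is an end of an arc of
length at most `n` of `C_σ`, which puts every vertex in a hammock. Conversely, the ends of the arcs
of a configuration `C` pair up the points of `ℤ / 2n` into an involution `σ`: two arcs meeting at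
a point coincide modulo `2n`, and crossing arcs contradict (C2). Then `C ⊆ C_σ`, and a
configuration contained in another one equals it, since an extra vertex would lie in the hammock
of an element of the smaller one.
-/

open Function

theorem eq_or_le_sub_or_add_le_of_intCast_eq {m : ℕ} {a b : ℤ} (h : (a : ZMod m) = b) :
    a = b ∨ a ≤ b - m ∨ b + m ≤ a := by
  obtain ⟨k, hk⟩ := (ZMod.intCast_eq_intCast_iff_dvd_sub a b m).1 h
  rcases lt_trichotomy k 0 with hk₀ | rfl | hk₀
  · exact .inr (.inr (by nlinarith))
  · exact .inl (by linarith)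
  · exact .inr (.inl (by nlinarith))

theorem two_mul_natCast_eq_zero (n : ℕ) : (2 * n : ZMod (2 * n)) = 0 := by
  exact_mod_cast ZMod.natCast_self (2 * n)

-- The arcs `[u, v]` and `[U, V]` of the circle `ℤ / 2n`, lifted to `ℤ`, cross or touch.
abbrev WeaklyCross (n : ℕ) (u v U V : ℤ) : Prop :=
  u ≤ U ∧ U ≤ v ∧ v ≤ V ∧ V ≤ u + 2 * n

-- Closed form of `h(y, x)`; `[x.1 + x.2 - n, x.1 + n]` is the arc of `x` turned by `π`,
-- read from its other end.
def hammockB (n : ℕ) (y x : ℤ × ℕ) : ℕ :=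
  (if WeaklyCross n y.1 (y.1 + y.2) x.1 (x.1 + x.2) then 1 else 0) +
    if y.2 < n ∧ WeaklyCross n y.1 (y.1 + y.2) (x.1 + x.2 - n) (x.1 + n) then 1 else 0

section Hammock

variable {n : ℕ}

theorem hammockB_pos_iff {q a : ℤ} {s b : ℕ} :
    0 < hammockB n (q, s) (a, b) ↔
      WeaklyCross n q (q + s) a (a + b) ∨
        s < n ∧ WeaklyCross n q (q + s) (a + b - n) (a + n) := by
  simp only [hammockB]
  split_ifs <;> simp <;> omega

theorem hammockB_self {c : ℤ × ℕ} (hc : c.2 ≤ n) : hammockB n c c = 1 := by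
  unfold hammockB
  split_ifs <;> omega

theorem hammockB_ωB_self (hn : 1 ≤ n) {c : ℤ × ℕ} (hc : c.2 ≤ n) :
    hammockB n (ωB n c) c = 1 := by
  unfold hammockB ωB
  split_ifs <;> omega

theorem ωB_ne_self (hn : 1 ≤ n) (c : ℤ × ℕ) : ωB n c ≠ c := by
  simp only [ωB, ne_eq, Prod.ext_iff]
  omega

set_option maxHeartbeats 1000000 in
theorem hammockB_eq_toNat_stepB_sub {q a : ℤ} {s b : ℕ} (hs : s ≤ n) (hb : b ≤ n)
    (hk : 2 ≤ 2 * (a - q) + b - s) :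
    hammockB n (q, s) (a, b) =
      (stepB n (hammockB n · (a, b)) (q, s) - hammockB n (q + 1, s) (a, b)).toNat := by
  simp only [hammockB, stepB]
  split_ifs <;> omega

theorem stepB_congr {f g : ℤ × ℕ → ℕ} {q : ℤ} {s : ℕ}
    (h₁ : s < n → f (q, s + 1) = g (q, s + 1))
    (h₂ : 0 < s → f (q + 1, s - 1) = g (q + 1, s - 1)) :
    stepB n f (q, s) = stepB n g (q, s) := by
  unfold stepB
  split_ifs <;> simp_all

theorem hB_eq_zero_of_ne {a : ℤ} {b : ℕ} (k : ℕ) :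
    ∀ (q : ℤ) (s : ℕ), s ≤ n → (k : ℤ) ≠ 2 * (a - q) + b - s →
      hB n (a, b) k (q, s) = 0 := by
  induction k using Nat.twoStepInduction with
  | zero =>
    intro q s _ hk
    simp only [hB, Prod.mk.injEq]
    split_ifs <;> omega
  | one =>
    intro q s _ hk
    simp only [hB, stepB, Prod.mk.injEq]
    split_ifs <;> omega
  | more k ih₀ ih₁ =>
    intro q s hs hk
    simp only [hB]
    rw [stepB_congr (g := fun _ => 0) (fun h => ih₁ q (s + 1) h (by push_cast at *; omega))
      (fun h => ih₁ (q + 1) (s - 1) (by omega) (by push_cast [Nat.cast_sub h] at *; omega)),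
      ih₀ (q + 1) s hs (by push_cast at *; omega)]
    simp [stepB]

theorem hB_eq_hammockB {a : ℤ} {b : ℕ} (hb : b ≤ n) (k : ℕ) :
    ∀ (q : ℤ) (s : ℕ), s ≤ n → (k : ℤ) = 2 * (a - q) + b - s →
      hB n (a, b) k (q, s) = hammockB n (q, s) (a, b) := by
  induction k using Nat.twoStepInduction with
  | zero =>
    intro q s hs hk
    simp only [hB, hammockB, Prod.mk.injEq]
    split_ifs <;> omega
  | one =>
    intro q s hs hk
    simp only [hB, stepB, hammockB, Prod.mk.injEq]
    split_ifs <;> omega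
  | more k ih₀ ih₁ =>
    intro q s hs hk
    simp only [hB]
    rw [stepB_congr (g := (hammockB n · (a, b)))
      (fun h => ih₁ q (s + 1) h (by push_cast at *; omega))
      (fun h => ih₁ (q + 1) (s - 1) (by omega) (by push_cast [Nat.cast_sub h] at *; omega)),
      ih₀ (q + 1) s hs (by push_cast at *; omega)]
    exact (hammockB_eq_toNat_stepB_sub hs hb (by push_cast at hk; omega)).symm

theorem hTotB_eq_hammockB {x y : ℤ × ℕ} (hy : y.2 ≤ n) (hx : x.2 ≤ n) :
    hTotB n y x = hammockB n y x := by
  obtain ⟨a, b⟩ := x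
  obtain ⟨q, s⟩ := y
  unfold hTotB
  by_cases hD : 0 ≤ 2 * (a - q) + b - s
  · rw [finsum_eq_single _ (2 * (a - q) + b - s).toNat
      fun k hk => hB_eq_zero_of_ne k q s hy (by omega)]
    exact hB_eq_hammockB hx _ q s hy (by omega)
  · rw [finsum_eq_zero_of_forall_eq_zero fun k => hB_eq_zero_of_ne k q s hy (by omega)]
    unfold hammockB
    split_ifs <;> omega

theorem isConfigB_iff (hn : 1 ≤ n) {C : Set (ℤ × ℕ)} :
    IsConfigB n C ↔
      (∀ v ∈ C, v.2 ≤ n) ∧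
        (∀ y : ℤ × ℕ, y.2 ≤ n → ∃ c ∈ C, 0 < hammockB n y c) ∧
        ωB n '' C = C ∧
        ∀ c ∈ C, ∀ d ∈ C, 0 < hammockB n d c → d = c ∨ d = ωB n c := by
  refine and_congr_right fun hle => and_congr ?_ (and_congr_right fun _ => ?_)
  · refine forall₂_congr fun y hy => exists_congr fun c => and_congr_right fun hc => ?_
    rw [hTotB_eq_hammockB hy (hle c hc)]
  · refine forall₂_congr fun c hc => forall₂_congr fun d hd => ?_
    rw [hTotB_eq_hammockB (hle d hd) (hle c hc), if_neg fun h => ωB_ne_self hn c h.2.symm]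
    by_cases h₁ : d = c
    · subst h₁
      simp [hammockB_self (hle d hc)]
    by_cases h₂ : d = ωB n c
    · subst h₂
      simp [hammockB_ωB_self hn (hle c hc)]
    simp only [h₁, h₂, or_self, if_false, imp_false]
    omega

end Hammock

section Shift

variable {n : ℕ} {S : Set (ℤ × ℕ)}

theorem image_ωB_eq_iff :
    ωB n '' S = S ↔ ∀ (p : ℤ) (r : ℕ), (p + n, r) ∈ S ↔ (p, r) ∈ S := by
  rw [Set.image_eq_preimage_of_inverse (f := ωB n) (g := fun v => (v.1 + n, v.2))
    (fun v => by simp [ωB]) (fun v => by simp [ωB]), Set.ext_iff, Prod.forall]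
  rfl

theorem add_mul_mem_iff (hS : ωB n '' S = S) (k : ℤ) {p : ℤ} {r : ℕ} :
    (p + k * n, r) ∈ S ↔ (p, r) ∈ S := by
  induction k using Int.induction_on with
  | zero => simp
  | succ k ih => rw [add_one_mul, ← add_assoc, image_ωB_eq_iff.1 hS, ih]
  | pred k ih =>
    rw [← ih, ← image_ωB_eq_iff.1 hS]
    ring_nf

theorem mem_iff_of_intCast_eq (hS : ωB n '' S = S) {p p' : ℤ} {r : ℕ}
    (h : (p' : ZMod (2 * n)) = p) : (p', r) ∈ S ↔ (p, r) ∈ S := by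
  obtain ⟨k, hk⟩ := (ZMod.intCast_eq_intCast_iff_dvd_sub _ _ _).1 h
  rw [show p' = p + (-2 * k) * n by push_cast at hk; linarith, add_mul_mem_iff hS]

end Shift

def IsNoncrossing {m : ℕ} (σ : ZMod m → ZMod m) : Prop :=
  ¬ ∃ i j : ZMod m, i.val < j.val ∧ j.val < (σ i).val ∧ (σ i).val < (σ j).val

def configOf (n : ℕ) (σ : ZMod (2 * n) → ZMod (2 * n)) : Set (ℤ × ℕ) :=
  {v : ℤ × ℕ | v.2 ≤ n ∧
    ((v.1 + (v.2 : ℤ) : ℤ) : ZMod (2 * n)) = σ ((v.1 : ℤ) : ZMod (2 * n))}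

section Brauer

variable {n : ℕ} {σ : ZMod (2 * n) → ZMod (2 * n)}

theorem mem_configOf {p : ℤ} {r : ℕ} :
    (p, r) ∈ configOf n σ ↔ r ≤ n ∧ ((p + r : ℤ) : ZMod (2 * n)) = σ p :=
  Iff.rfl

theorem add_mem_configOf_iff (hrot : ∀ i, σ (i + n) = σ i + n) {p : ℤ} {r : ℕ} :
    (p + n, r) ∈ configOf n σ ↔ (p, r) ∈ configOf n σ := by
  simp only [mem_configOf, Int.cast_add, Int.cast_natCast, hrot]
  rw [add_right_comm, add_left_inj]

theorem exists_mem_configOf (hn : 1 ≤ n) (hσ : Involutive σ) (w : ℤ) :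
    ∃ t : ℕ, (w, t) ∈ configOf n σ ∨ (w - t, t) ∈ configOf n σ := by
  have : NeZero (2 * n) := ⟨by omega⟩
  set t := (σ w - w).val
  have htw : (t : ZMod (2 * n)) = σ w - w := ZMod.natCast_zmod_val _
  have ht : t < 2 * n := ZMod.val_lt _
  by_cases htn : t ≤ n
  · refine ⟨t, .inl ⟨htn, ?_⟩⟩
    push_cast
    rw [htw, add_sub_cancel]
  · refine ⟨2 * n - t, .inr ⟨by omega, ?_⟩⟩
    have : ((w - (2 * n - t : ℕ) : ℤ) : ZMod (2 * n)) = σ w := by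
      push_cast [Nat.cast_sub ht.le]
      linear_combination htw - two_mul_natCast_eq_zero n
    rw [sub_add_cancel, this, hσ]

theorem configOf_injective (hn : 1 ≤ n) {σ₁ σ₂ : ZMod (2 * n) → ZMod (2 * n)}
    (h₁ : Involutive σ₁) (h₂ : Involutive σ₂) (h : configOf n σ₁ = configOf n σ₂) :
    σ₁ = σ₂ := by
  funext i
  obtain ⟨w, rfl⟩ := ZMod.intCast_surjective i
  obtain ⟨t, ht | ht⟩ := exists_mem_configOf hn h₁ w
  · exact ht.2.symm.trans (h ▸ ht).2
  · have e₁ := (mem_configOf.1 ht).2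
    have e₂ := (mem_configOf.1 (h ▸ ht)).2
    rw [sub_add_cancel] at e₁ e₂
    calc σ₁ w = ((w - t : ℤ) : ZMod (2 * n)) := by rw [e₁, h₁]
      _ = σ₂ w := by rw [e₂, h₂]

theorem IsNoncrossing.not_lt_lt_lt (hn : 1 ≤ n) (hσ : Involutive σ) (hnc : IsNoncrossing σ)
    {u v U V : ℤ} (huv : (v : ZMod (2 * n)) = σ u) (hUV : (V : ZMod (2 * n)) = σ U) :
    ¬ (u < U ∧ U < v ∧ v < V ∧ V < u + 2 * n) := by
  have : NeZero (2 * n) := ⟨by omega⟩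
  rintro ⟨h₁, h₂, h₃, h₄⟩
  have hvu : σ v = u := by rw [huv, hσ]
  have hVU : σ V = U := by rw [hUV, hσ]
  have hlt (x : ℤ) : (x : ZMod (2 * n)).val < 2 * n := ZMod.val_lt _
  have hval (x y : ℤ) := eq_or_le_sub_or_add_le_of_intCast_eq (m := 2 * n)
    (a := (y : ZMod (2 * n)).val + x) (b := (x : ZMod (2 * n)).val + y)
    (by push_cast; simp [add_comm])
  have := hlt u; have := hlt U; have := hlt v; have := hlt V
  have := hval u U; have := hval U v; have := hval v V
  set eu := (u : ZMod (2 * n)).val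
  set eU := (U : ZMod (2 * n)).val
  set ev := (v : ZMod (2 * n)).val
  set eV := (V : ZMod (2 * n)).val
  -- the residues of `u, U, v, V` are in cyclic order, starting at one of the four
  have : eu < eU ∧ eU < ev ∧ ev < eV ∨ eV < eu ∧ eu < eU ∧ eU < ev ∨
      ev < eV ∧ eV < eu ∧ eu < eU ∨ eU < ev ∧ ev < eV ∧ eV < eu := by
    omega
  rcases this with h | h | h | h
  · exact hnc ⟨u, U, by rwa [← huv, ← hUV]⟩
  · exact hnc ⟨V, u, by rwa [hVU, ← huv]⟩
  · exact hnc ⟨v, V, by rwa [hvu, hVU]⟩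
  · exact hnc ⟨U, v, by rwa [← hUV, hvu]⟩

theorem IsNoncrossing.arcs_eq_of_weaklyCross (hn : 1 ≤ n) (hσ : Involutive σ)
    (hnc : IsNoncrossing σ)
    {u v U V : ℤ} (huv : (v : ZMod (2 * n)) = σ u) (hUV : (V : ZMod (2 * n)) = σ U)
    (h : WeaklyCross n u v U V) :
    (U : ZMod (2 * n)) = u ∧ (V : ZMod (2 * n)) = v ∨
      (U : ZMod (2 * n)) = v ∧ (V : ZMod (2 * n)) = u := by
  obtain ⟨h₁, h₂, h₃, h₄⟩ := h
  rcases h₁.lt_or_eq with h₁ | rfl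
  swap
  · exact .inl ⟨rfl, by rw [hUV, huv]⟩
  rcases h₂.lt_or_eq with h₂ | rfl
  swap
  · exact .inr ⟨rfl, by rw [hUV, huv, hσ]⟩
  rcases h₃.lt_or_eq with h₃ | rfl
  swap
  · exact .inl ⟨by rw [← hσ (U : ZMod (2 * n)), ← hUV, huv, hσ], rfl⟩
  rcases h₄.lt_or_eq with h₄ | h₄
  swap
  · have hVu : (V : ZMod (2 * n)) = u := by
      rw [h₄]
      push_cast
      rw [two_mul_natCast_eq_zero, add_zero]
    exact .inr ⟨by rw [← hσ (U : ZMod (2 * n)), ← hUV, hVu, huv], hVu⟩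
  exact absurd ⟨h₁, h₂, h₃, h₄⟩ (hnc.not_lt_lt_lt hn hσ huv hUV)

namespace IsSymTwoBrauer

theorem involutive (hσ : IsSymTwoBrauer n σ) : Involutive σ :=
  hσ.1

theorem isNoncrossing (hσ : IsSymTwoBrauer n σ) : IsNoncrossing σ :=
  hσ.2.1

theorem apply_add (hσ : IsSymTwoBrauer n σ) (i : ZMod (2 * n)) : σ (i + n) = σ i + n :=
  hσ.2.2 i

theorem rotate_arc (hσ : IsSymTwoBrauer n σ) {a : ℤ} {b : ℕ}
    (h : ((a + b : ℤ) : ZMod (2 * n)) = σ a) :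
    ((a + n : ℤ) : ZMod (2 * n)) = σ (a + b - n : ℤ) := by
  have : ((a + b - n : ℤ) : ZMod (2 * n)) = σ a + n := by
    rw [← h]
    push_cast
    linear_combination -two_mul_natCast_eq_zero n
  rw [this, hσ.apply_add, hσ.involutive]
  push_cast
  rfl

theorem eq_or_eq_ωB_of_hammockB_pos (hn : 1 ≤ n) (hσ : IsSymTwoBrauer n σ) {c d : ℤ × ℕ}
    (hc : c ∈ configOf n σ) (hd : d ∈ configOf n σ) (h : 0 < hammockB n d c) :
    d = c ∨ d = ωB n c := by
  obtain ⟨a, b⟩ := c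
  obtain ⟨q, s⟩ := d
  obtain ⟨hb, hab⟩ := mem_configOf.1 hc
  obtain ⟨hs, hqs⟩ := mem_configOf.1 hd
  have hnc := hσ.isNoncrossing
  simp only [ωB, Prod.mk.injEq]
  rcases hammockB_pos_iff.1 h with h | ⟨hsn, h⟩
  · obtain ⟨e₁, e₂⟩ | ⟨e₁, e₂⟩ :=
      hnc.arcs_eq_of_weaklyCross hn hσ.involutive hqs hab h <;>
      have := eq_or_le_sub_or_add_le_of_intCast_eq e₁ <;>
      have := eq_or_le_sub_or_add_le_of_intCast_eq e₂ <;> omega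
  · obtain ⟨e₁, e₂⟩ | ⟨e₁, e₂⟩ :=
      hnc.arcs_eq_of_weaklyCross hn hσ.involutive hqs (hσ.rotate_arc hab) h <;>
      have := eq_or_le_sub_or_add_le_of_intCast_eq e₁ <;>
      have := eq_or_le_sub_or_add_le_of_intCast_eq e₂ <;> omega

theorem exists_hammockB_pos (hn : 1 ≤ n) (hσ : IsSymTwoBrauer n σ) {q : ℤ} {s : ℕ}
    (hs : s ≤ n) : ∃ c ∈ configOf n σ, 0 < hammockB n (q, s) c := by
  obtain ⟨t, ht | ht⟩ := exists_mem_configOf hn hσ.involutive (q + s) <;>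
    have htn := (mem_configOf.1 ht).1
  · exact ⟨_, ht, hammockB_pos_iff.2 (.inl (by omega))⟩
  by_cases hts : t ≤ s
  · exact ⟨_, ht, hammockB_pos_iff.2 (.inl (by omega))⟩
  · exact ⟨_, (add_mem_configOf_iff hσ.apply_add).2 ht,
      hammockB_pos_iff.2 (.inr ⟨by omega, by omega⟩)⟩

theorem isConfigB_configOf (hn : 1 ≤ n) (hσ : IsSymTwoBrauer n σ) :
    IsConfigB n (configOf n σ) :=
  (isConfigB_iff hn).2 ⟨fun _ hv => hv.1, fun _ hy => hσ.exists_hammockB_pos hn hy,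
    image_ωB_eq_iff.2 fun _ _ => add_mem_configOf_iff hσ.apply_add,
    fun _ hc _ hd => hσ.eq_or_eq_ωB_of_hammockB_pos hn hc hd⟩

end IsSymTwoBrauer

end Brauer

def IsChord (n : ℕ) (C : Set (ℤ × ℕ)) (i j : ZMod (2 * n)) : Prop :=
  ∃ (p : ℤ) (r : ℕ), (p, r) ∈ C ∧
    ((p : ZMod (2 * n)) = i ∧ ((p + r : ℤ) : ZMod (2 * n)) = j ∨
      (p : ZMod (2 * n)) = j ∧ ((p + r : ℤ) : ZMod (2 * n)) = i)

noncomputable def brauerOf (n : ℕ) (C : Set (ℤ × ℕ)) (i : ZMod (2 * n)) : ZMod (2 * n) :=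
  Classical.epsilon (IsChord n C i)

theorem IsChord.symm {n : ℕ} {C : Set (ℤ × ℕ)} {i j : ZMod (2 * n)} (h : IsChord n C i j) :
    IsChord n C j i :=
  let ⟨p, r, hm, h⟩ := h
  ⟨p, r, hm, h.symm⟩

namespace IsConfigB

variable {n : ℕ} {C : Set (ℤ × ℕ)}

theorem le (hC : IsConfigB n C) {p : ℤ} {r : ℕ} (h : (p, r) ∈ C) : r ≤ n :=
  hC.1 _ h

theorem image_ωB_eq (hC : IsConfigB n C) : ωB n '' C = C :=
  hC.2.2.1

theorem eq_of_weaklyCross (hn : 1 ≤ n) (hC : IsConfigB n C) {a q : ℤ} {b s : ℕ}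
    (hc : (a, b) ∈ C) (hd : (q, s) ∈ C) (h : WeaklyCross n q (q + s) a (a + b)) :
    (q = a ∨ q = a - n) ∧ s = b := by
  have := ((isConfigB_iff hn).1 hC).2.2.2 _ hc _ hd (hammockB_pos_iff.2 (.inl h))
  simp only [ωB, Prod.mk.injEq] at this
  omega

theorem not_lt_lt_lt (hn : 1 ≤ n) (hC : IsConfigB n C) {p p' : ℤ} {r r' : ℕ}
    (hd : (p, r) ∈ C) (hc : (p', r') ∈ C) : ¬ (p < p' ∧ p' < p + r ∧ p + r < p' + r') := by
  rintro ⟨h₁, h₂, h₃⟩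
  have := hC.le hd
  have := hC.le hc
  have := hC.eq_of_weaklyCross hn hc hd (by omega)
  omega

theorem exists_mem (hn : 1 ≤ n) (hC : IsConfigB n C) (w : ℤ) :
    ∃ r : ℕ, (w, r) ∈ C ∨ (w - r, r) ∈ C := by
  obtain ⟨⟨a, b⟩, hc, h⟩ := ((isConfigB_iff hn).1 hC).2.1 (w, 0) (Nat.zero_le _)
  refine ⟨b, ?_⟩
  rcases hammockB_pos_iff.1 h with h | ⟨-, h⟩
  · obtain rfl : a = w := by omega
    exact .inl hc
  · rw [show w - b = a + (-1) * n by omega, add_mul_mem_iff hC.image_ωB_eq]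
    exact .inr hc

theorem eq_of_intCast_eq (hn : 1 ≤ n) (hC : IsConfigB n C) {p p' : ℤ} {r r' : ℕ}
    (h : (p, r) ∈ C) (h' : (p', r') ∈ C) (hp : (p' : ZMod (2 * n)) = p) : r' = r := by
  replace h' := (mem_iff_of_intCast_eq hC.image_ωB_eq hp).1 h'
  rcases le_total r' r with hr | hr
  · exact (hC.eq_of_weaklyCross hn h h' (by have := hC.le h; omega)).2
  · exact (hC.eq_of_weaklyCross hn h' h (by have := hC.le h'; omega)).2.symm

theorem intCast_eq_of_add_eq (hn : 1 ≤ n) (hC : IsConfigB n C) {p p' : ℤ} {r r' : ℕ}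
    (h : (p, r) ∈ C) (h' : (p', r') ∈ C)
    (hpr : ((p' + r' : ℤ) : ZMod (2 * n)) = (p + r : ℤ)) :
    (p' : ZMod (2 * n)) = p := by
  have hp : ((p + r - r' : ℤ) : ZMod (2 * n)) = p' := by
    push_cast at hpr ⊢
    linear_combination -hpr
  replace h' := (mem_iff_of_intCast_eq hC.image_ωB_eq hp).2 h'
  have := hC.le h
  have := hC.le h'
  have hr : r' = r := by
    rcases le_total r' r with hr | hr
    · exact (hC.eq_of_weaklyCross hn h' h (by omega)).2.symm
    · exact (hC.eq_of_weaklyCross hn h h' (by omega)).2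
  rw [← hp, hr, add_sub_cancel_right]

theorem intCast_eq_of_eq_add (hn : 1 ≤ n) (hC : IsConfigB n C) {p p' : ℤ} {r r' : ℕ}
    (h : (p, r) ∈ C) (h' : (p', r') ∈ C) (hp : ((p' + r' : ℤ) : ZMod (2 * n)) = p) :
    (p' : ZMod (2 * n)) = (p + r : ℤ) := by
  have hp' : ((p - r' : ℤ) : ZMod (2 * n)) = p' := by
    push_cast at hp ⊢
    linear_combination -hp
  replace h' := (mem_iff_of_intCast_eq hC.image_ωB_eq hp').2 h'
  have := hC.le h
  have := hC.le h'
  have := hC.eq_of_weaklyCross hn h h' (by omega)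
  -- the two arcs meet at `p`, so they are both trivial or both halves of the circle
  have hrr : ((r + r' : ℕ) : ZMod (2 * n)) = 0 := by
    obtain ⟨hr, hr'⟩ | ⟨hr, hr'⟩ : r = 0 ∧ r' = 0 ∨ r = n ∧ r' = n := by omega
    · simp [hr, hr']
    · rw [hr, hr', ← two_mul]
      exact_mod_cast two_mul_natCast_eq_zero n
  rw [← hp']
  push_cast at hrr ⊢
  linear_combination -hrr

theorem isChord_unique (hn : 1 ≤ n) (hC : IsConfigB n C) {i j j' : ZMod (2 * n)}
    (h : IsChord n C i j) (h' : IsChord n C i j') : j = j' := by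
  obtain ⟨p, r, hm, ⟨rfl, rfl⟩ | ⟨rfl, rfl⟩⟩ := h <;>
    obtain ⟨p', r', hm', ⟨hp, rfl⟩ | ⟨rfl, hp⟩⟩ := h'
  · push_cast
    rw [hp, hC.eq_of_intCast_eq hn hm hm' hp]
  · exact (hC.intCast_eq_of_eq_add hn hm hm' hp).symm
  · exact hC.intCast_eq_of_eq_add hn hm' hm hp.symm
  · exact (hC.intCast_eq_of_add_eq hn hm hm' hp).symm

theorem exists_isChord (hn : 1 ≤ n) (hC : IsConfigB n C) (i : ZMod (2 * n)) :
    ∃ j, IsChord n C i j := by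
  obtain ⟨w, rfl⟩ := ZMod.intCast_surjective i
  obtain ⟨r, h | h⟩ := hC.exists_mem hn w
  · exact ⟨_, w, r, h, .inl ⟨rfl, rfl⟩⟩
  · exact ⟨_, w - r, r, h, .inr ⟨rfl, by rw [sub_add_cancel]⟩⟩

theorem isChord_brauerOf (hn : 1 ≤ n) (hC : IsConfigB n C) (i : ZMod (2 * n)) :
    IsChord n C i (brauerOf n C i) :=
  Classical.epsilon_spec (hC.exists_isChord hn i)

theorem brauerOf_eq (hn : 1 ≤ n) (hC : IsConfigB n C) {i j : ZMod (2 * n)}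
    (h : IsChord n C i j) : brauerOf n C i = j :=
  hC.isChord_unique hn (hC.isChord_brauerOf hn i) h

theorem isChord_add (hC : IsConfigB n C) {i j : ZMod (2 * n)} (h : IsChord n C i j) :
    IsChord n C (i + n) (j + n) := by
  obtain ⟨p, r, hm, h⟩ := h
  refine ⟨p + n, r, (image_ωB_eq_iff.1 hC.image_ωB_eq p r).2 hm, ?_⟩
  push_cast at h ⊢
  rw [add_right_comm]
  rcases h with ⟨rfl, rfl⟩ | ⟨rfl, rfl⟩
  · exact .inl ⟨rfl, rfl⟩
  · exact .inr ⟨rfl, rfl⟩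

theorem exists_mem_of_isChord (hC : IsConfigB n C) {u v : ℤ} (huv : u < v)
    (hvu : v < u + 2 * n) (h : IsChord n C u v) :
    ∃ r : ℕ, (u, r) ∈ C ∧ u + r = v ∨ (v, r) ∈ C ∧ v + r = u + 2 * n := by
  obtain ⟨p, r, hm, ⟨hp, hpr⟩ | ⟨hp, hpr⟩⟩ := h <;> have hr := hC.le hm
  · have : ((u + r : ℤ) : ZMod (2 * n)) = v := by
      rw [← hpr]
      push_cast
      rw [hp]
    have := eq_or_le_sub_or_add_le_of_intCast_eq this
    exact ⟨r, .inl ⟨(mem_iff_of_intCast_eq hC.image_ωB_eq hp.symm).2 hm, by omega⟩⟩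
  · have : ((v + r - 2 * n : ℤ) : ZMod (2 * n)) = u := by
      rw [← hpr]
      push_cast
      rw [hp, two_mul_natCast_eq_zero, sub_zero]
    have := eq_or_le_sub_or_add_le_of_intCast_eq this
    exact ⟨r, .inr ⟨(mem_iff_of_intCast_eq hC.image_ωB_eq hp.symm).2 hm, by omega⟩⟩

theorem isNoncrossing_brauerOf (hn : 1 ≤ n) (hC : IsConfigB n C) :
    IsNoncrossing (brauerOf n C) := by
  have : NeZero (2 * n) := ⟨by omega⟩
  rintro ⟨i, j, h₁, h₂, h₃⟩
  have hchord (k : ZMod (2 * n)) : IsChord n C (k.val : ℤ) ((brauerOf n C k).val : ℤ) := by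
    simpa using hC.isChord_brauerOf hn k
  have hlt (k : ZMod (2 * n)) : k.val < 2 * n := ZMod.val_lt k
  have := hlt i; have := hlt j; have := hlt (brauerOf n C i); have := hlt (brauerOf n C j)
  obtain ⟨r₁, ⟨hm₁, e₁⟩ | ⟨hm₁, e₁⟩⟩ :=
    hC.exists_mem_of_isChord (by omega) (by omega) (hchord i) <;>
  obtain ⟨r₂, ⟨hm₂, e₂⟩ | ⟨hm₂, e₂⟩⟩ :=
    hC.exists_mem_of_isChord (by omega) (by omega) (hchord j)
  · exact hC.not_lt_lt_lt hn hm₁ hm₂ (by omega)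
  · exact hC.not_lt_lt_lt hn ((add_mul_mem_iff hC.image_ωB_eq (-2)).2 hm₂) hm₁ (by omega)
  · exact hC.not_lt_lt_lt hn hm₂ hm₁ (by omega)
  · exact hC.not_lt_lt_lt hn hm₁ hm₂ (by omega)

theorem isSymTwoBrauer_brauerOf (hn : 1 ≤ n) (hC : IsConfigB n C) :
    IsSymTwoBrauer n (brauerOf n C) :=
  ⟨fun i => hC.brauerOf_eq hn (hC.isChord_brauerOf hn i).symm, hC.isNoncrossing_brauerOf hn,
    fun i => hC.brauerOf_eq hn (hC.isChord_add (hC.isChord_brauerOf hn i))⟩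

theorem subset_configOf_brauerOf (hn : 1 ≤ n) (hC : IsConfigB n C) :
    C ⊆ configOf n (brauerOf n C) := fun ⟨p, r⟩ h =>
  ⟨hC.le h, (hC.brauerOf_eq hn ⟨p, r, h, .inl ⟨rfl, rfl⟩⟩).symm⟩

theorem eq_of_subset (hn : 1 ≤ n) (hC : IsConfigB n C) {C' : Set (ℤ × ℕ)}
    (hC' : IsConfigB n C') (h : C ⊆ C') : C = C' := by
  refine h.antisymm fun d hd => ?_
  obtain ⟨c, hc, hpos⟩ := ((isConfigB_iff hn).1 hC).2.1 d (hC'.1 d hd)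
  rcases ((isConfigB_iff hn).1 hC').2.2.2 c (h hc) d hd hpos with rfl | rfl
  · exact hc
  · rw [← hC.image_ωB_eq]
    exact Set.mem_image_of_mem _ hc

end IsConfigB

/-- Theorem 7.2 (type `B`): a subset `C` of the vertices of the valued translation
quiver realizing `ℤB_{n+1}` is a configuration iff it is of the form
`{(p,r) : (p+r : ZMod 2n) = σ (p : ZMod 2n)}` for a (unique) symmetric `2`-Brauer
relation `σ` of rank `2n`; this gives a bijection between configurations of
`ℤB_{n+1}` and symmetric `2`-Brauer relations of rank `2n`. -/
theorem config_ZB_iff_symTwoBrauer (n : ℕ) (hn : 1 ≤ n) :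
    (∀ C : Set (ℤ × ℕ),
      IsConfigB n C ↔
        ∃ σ : ZMod (2 * n) → ZMod (2 * n), IsSymTwoBrauer n σ ∧
          C = {v : ℤ × ℕ | v.2 ≤ n ∧
            ((v.1 + (v.2 : ℤ) : ℤ) : ZMod (2 * n)) = σ ((v.1 : ℤ) : ZMod (2 * n))}) ∧
      ∀ σ₁ σ₂ : ZMod (2 * n) → ZMod (2 * n),
        IsSymTwoBrauer n σ₁ → IsSymTwoBrauer n σ₂ →
        {v : ℤ × ℕ | v.2 ≤ n ∧
            ((v.1 + (v.2 : ℤ) : ℤ) : ZMod (2 * n)) = σ₁ ((v.1 : ℤ) : ZMod (2 * n))} =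
          {v : ℤ × ℕ | v.2 ≤ n ∧
            ((v.1 + (v.2 : ℤ) : ℤ) : ZMod (2 * n)) = σ₂ ((v.1 : ℤ) : ZMod (2 * n))} →
        σ₁ = σ₂ := by
  refine ⟨fun C => ⟨fun hC => ?_, ?_⟩, fun σ₁ σ₂ h₁ h₂ h =>
    configOf_injective hn h₁.involutive h₂.involutive h⟩
  · have hσ := hC.isSymTwoBrauer_brauerOf hn
    exact ⟨brauerOf n C, hσ,
      hC.eq_of_subset hn (hσ.isConfigB_configOf hn) (hC.subset_configOf_brauerOf hn)⟩
  · rintro ⟨σ, hσ, rfl⟩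
    exact hσ.isConfigB_configOf hn
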